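/- Let x ∈ ℂ with x ≠ 0. Let V be a 4-dimensional ℂ-vector space and let f be an endomorphism of V whose matrix in some basis of V is diag(J(1,2), J(x,1), J(x⁻¹,1)). Then there is a basis of the 6-dimensional space ⋀²V in which the induced endomorphism ⋀²f has matrix diag(J(x,2), J(x⁻¹,2), J(1,1), J(1,1)). -/

import Mathlib

/-- The `n × n` Jordan block with eigenvalue `lam`: every diagonal entry is `lam` and every
entry directly above the diagonal is `1`. -/
def jordanBlock (lam : ℂ) (n : ℕ) : Matrix (Fin n) (Fin n) ℂ :=
  Matrix.of fun i j : Fin n =>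
    if (j : ℕ) = (i : ℕ) then lam else if (j : ℕ) = (i : ℕ) + 1 then 1 else 0

/-- The wedge `v ∧ w` as an element of the second exterior power `⋀[ℂ]^2 V`. -/
def wedge {V : Type*} [AddCommGroup V] [Module ℂ V] (v w : V) : ⋀[ℂ]^2 V :=
  ⟨ExteriorAlgebra.ι ℂ v * ExteriorAlgebra.ι ℂ w, by
    show _ ∈ LinearMap.range (ExteriorAlgebra.ι ℂ (M := V)) ^ 2
    rw [pow_two]
    exact Submodule.mul_mem_mul (LinearMap.mem_range_self _ v) (LinearMap.mem_range_self _ w)⟩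

/-!
With `B = (e₀, e₁, e₂, e₃)` we have `f e₀ = e₀`, `f e₁ = e₀ + e₁`, `f e₂ = x e₂`, `f e₃ = x⁻¹ e₃`.
Hence `⋀²f` fixes `e₀ ∧ e₁` and `e₂ ∧ e₃`, and for `e = e₂` (eigenvalue `y = x`) or `e = e₃`
(eigenvalue `y = x⁻¹`) it sends `e₀ ∧ e` to `y (e₀ ∧ e)` and `e₁ ∧ e` to `y (e₀ ∧ e) + y (e₁ ∧ e)`,
so `e₀ ∧ e, y⁻¹ (e₁ ∧ e)` is a Jordan chain of length two. Up to sign and nonzero scalars, these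
six vectors are all the wedges `eᵢ ∧ eⱼ` with `i ≠ j`, so they span `⋀²V`; its dimension is
`choose 4 2 = 6`, so they form a basis.
-/

theorem LinearMap.toMatrix_eq_iff_apply_basis {R M ι : Type*} [CommRing R] [AddCommGroup M]
    [Module R M] [Fintype ι] [DecidableEq ι] (C : Module.Basis ι R M) (g : M →ₗ[R] M)
    (A : Matrix ι ι R) :
    LinearMap.toMatrix C C g = A ↔ ∀ j, g (C j) = ∑ i, A i j • C i := by
  constructor
  · rintro rfl j
    rw [← Matrix.toLin_self C C, Matrix.toLin_toMatrix]
  · intro h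
    rw [← LinearMap.toMatrix_toLin C C A]
    exact congrArg (LinearMap.toMatrix C C) (C.ext fun j => by rw [Matrix.toLin_self, h])

section Wedge

variable {V : Type*} [AddCommGroup V] [Module ℂ V]

@[simp] lemma wedge_add_left (u v w : V) : wedge (u + v) w = wedge u w + wedge v w :=
  Subtype.ext (by simp [wedge, add_mul])

@[simp] lemma wedge_add_right (u v w : V) : wedge u (v + w) = wedge u v + wedge u w :=
  Subtype.ext (by simp [wedge, mul_add])

@[simp] lemma wedge_smul_left (r : ℂ) (v w : V) : wedge (r • v) w = r • wedge v w :=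
  Subtype.ext (by simp [wedge])

@[simp] lemma wedge_smul_right (r : ℂ) (v w : V) : wedge v (r • w) = r • wedge v w :=
  Subtype.ext (by simp [wedge])

@[simp] lemma wedge_self (v : V) : wedge v v = 0 :=
  Subtype.ext (by simp [wedge])

lemma wedge_swap (v w : V) : wedge w v = -wedge v w := by
  have h := wedge_self (v + w)
  rw [wedge_add_left, wedge_add_right, wedge_add_right, wedge_self, wedge_self, zero_add,
    add_zero] at h
  exact eq_neg_of_add_eq_zero_right h

lemma wedge_eq_ιMulti (v : Fin 2 → V) : wedge (v 0) (v 1) = exteriorPower.ιMulti ℂ 2 v :=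
  Subtype.ext (by simp [wedge, ExteriorAlgebra.ιMulti_apply, Matrix.vecTail])

lemma span_range_wedge_basis {ι : Type*} (b : Module.Basis ι ℂ V) :
    Submodule.span ℂ (Set.range fun p : ι × ι => wedge (b p.1) (b p.2)) = ⊤ := by
  rw [eq_top_iff, ← exteriorPower.ιMulti_span_of_span ℂ 2 V b.span_eq, Submodule.span_le]
  rintro _ ⟨v, hv, rfl⟩
  obtain ⟨i, hi⟩ := hv (Set.mem_range_self 0)
  obtain ⟨j, hj⟩ := hv (Set.mem_range_self 1)
  exact Submodule.subset_span ⟨(i, j), by simp only [hi, hj, wedge_eq_ιMulti]⟩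

lemma wedge_mem_of_swap_mem {S : Submodule ℂ (⋀[ℂ]^2 V)} {v w : V} (h : wedge v w ∈ S) :
    wedge w v ∈ S := by
  rw [wedge_swap]
  exact S.neg_mem h

end Wedge

lemma finrank_exteriorPower_eq_choose {V ι : Type*} [AddCommGroup V] [Module ℂ V] [Fintype ι]
    (b : Module.Basis ι ℂ V) (n : ℕ) :
    Module.finrank ℂ (⋀[ℂ]^n V) = (Fintype.card ι).choose n := by
  have := Module.Free.of_basis b
  have := Module.Finite.of_basis b
  rw [exteriorPower.finrank_eq, Module.finrank_eq_card_basis b]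

section JordanChain

variable {V : Type*} [AddCommGroup V] [Module ℂ V] {f : V →ₗ[ℂ] V}
  {g : (⋀[ℂ]^2 V) →ₗ[ℂ] (⋀[ℂ]^2 V)} {e₀ e₁ : V}

lemma apply_wedge_of_jordanChain (hg : ∀ v w : V, g (wedge v w) = wedge (f v) (f w))
    (h₀ : f e₀ = e₀) (h₁ : f e₁ = e₀ + e₁) {y : ℂ} (hy : y ≠ 0) {e : V} (he : f e = y • e) :
    g (wedge e₀ e) = y • wedge e₀ e ∧
      g (y⁻¹ • wedge e₁ e) = wedge e₀ e + y • y⁻¹ • wedge e₁ e := by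
  refine ⟨by simp [hg, h₀, he], ?_⟩
  simp [hg, h₁, he, smul_smul, hy]

end JordanChain

section WedgeJordan

open Sum

variable {V : Type*} [AddCommGroup V] [Module ℂ V]

noncomputable def wedgeJordanFamily (x : ℂ) (e₀ e₁ e₂ e₃ : V) :
    Fin 2 ⊕ (Fin 2 ⊕ (Fin 1 ⊕ Fin 1)) → ⋀[ℂ]^2 V :=
  Sum.elim ![wedge e₀ e₂, x⁻¹ • wedge e₁ e₂]
    (Sum.elim ![wedge e₀ e₃, x • wedge e₁ e₃] (Sum.elim ![wedge e₀ e₁] ![wedge e₂ e₃]))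

lemma apply_wedgeJordanFamily {x : ℂ} (hx : x ≠ 0) {f : V →ₗ[ℂ] V}
    {g : (⋀[ℂ]^2 V) →ₗ[ℂ] (⋀[ℂ]^2 V)} (hg : ∀ v w : V, g (wedge v w) = wedge (f v) (f w))
    {e₀ e₁ e₂ e₃ : V} (h₀ : f e₀ = e₀) (h₁ : f e₁ = e₀ + e₁) (h₂ : f e₂ = x • e₂)
    (h₃ : f e₃ = x⁻¹ • e₃) (j : Fin 2 ⊕ (Fin 2 ⊕ (Fin 1 ⊕ Fin 1))) :
    g (wedgeJordanFamily x e₀ e₁ e₂ e₃ j) =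
      ∑ i, Matrix.fromBlocks (jordanBlock x 2) 0 0 (Matrix.fromBlocks (jordanBlock x⁻¹ 2) 0 0
        (Matrix.fromBlocks (jordanBlock 1 1) 0 0 (jordanBlock 1 1))) i j •
          wedgeJordanFamily x e₀ e₁ e₂ e₃ i := by
  obtain ⟨hg₀₂, hg₁₂⟩ := apply_wedge_of_jordanChain hg h₀ h₁ hx h₂
  obtain ⟨hg₀₃, hg₁₃⟩ := apply_wedge_of_jordanChain hg h₀ h₁ (inv_ne_zero hx) h₃
  rw [inv_inv] at hg₁₃
  have hg₀₁ : g (wedge e₀ e₁) = wedge e₀ e₁ := by simp [hg, h₀, h₁]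
  have hg₂₃ : g (wedge e₂ e₃) = wedge e₂ e₃ := by simp [hg, h₂, h₃, smul_smul, hx]
  rcases j with j | j | j | j <;> fin_cases j <;>
    simp [wedgeJordanFamily, Fintype.sum_sum_type, jordanBlock, hg₀₂, hg₁₂, hg₀₃, hg₁₃, hg₀₁,
      hg₂₃]

lemma top_le_span_wedgeJordanFamily {x : ℂ} (hx : x ≠ 0)
    (B : Module.Basis (Fin 2 ⊕ (Fin 1 ⊕ Fin 1)) ℂ V) :
    ⊤ ≤ Submodule.span ℂ (Set.range (wedgeJordanFamily x (B (inl 0)) (B (inl 1))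
      (B (inr (inl 0))) (B (inr (inr 0))))) := by
  set S := Submodule.span ℂ (Set.range (wedgeJordanFamily x (B (inl 0)) (B (inl 1))
      (B (inr (inl 0))) (B (inr (inr 0)))))
  have hc (t) : wedgeJordanFamily x _ _ _ _ t ∈ S := Submodule.subset_span ⟨t, rfl⟩
  have m₀₂ : wedge (B (inl 0)) (B (inr (inl 0))) ∈ S := hc (inl 0)
  have m₀₃ : wedge (B (inl 0)) (B (inr (inr 0))) ∈ S := hc (inr (inl 0))
  have m₀₁ : wedge (B (inl 0)) (B (inl 1)) ∈ S := hc (inr (inr (inl 0)))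
  have m₂₃ : wedge (B (inr (inl 0))) (B (inr (inr 0))) ∈ S := hc (inr (inr (inr 0)))
  have m₁₂ : wedge (B (inl 1)) (B (inr (inl 0))) ∈ S := by
    simpa [wedgeJordanFamily, smul_smul, hx] using S.smul_mem x (hc (inl 1))
  have m₁₃ : wedge (B (inl 1)) (B (inr (inr 0))) ∈ S := by
    simpa [wedgeJordanFamily, smul_smul, hx] using S.smul_mem x⁻¹ (hc (inr (inl 1)))
  rw [← span_range_wedge_basis B, Submodule.span_le]
  rintro _ ⟨⟨p, q⟩, rfl⟩
  rcases p with p | p | p <;> rcases q with q | q | q <;> fin_cases p <;> fin_cases q <;>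
    dsimp only <;>
    first
      | (rw [wedge_self]; exact S.zero_mem)
      | assumption
      | exact wedge_mem_of_swap_mem ‹_›

noncomputable def wedgeJordanBasis {x : ℂ} (hx : x ≠ 0) (B : Module.Basis (Fin 2 ⊕ (Fin 1 ⊕ Fin 1)) ℂ V) :
    Module.Basis (Fin 2 ⊕ (Fin 2 ⊕ (Fin 1 ⊕ Fin 1))) ℂ (⋀[ℂ]^2 V) :=
  basisOfTopLeSpanOfCardEqFinrank _ (top_le_span_wedgeJordanFamily hx B)
    (by rw [finrank_exteriorPower_eq_choose B]; rfl)

end WedgeJordan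

open Sum in
lemma apply_basis_of_toMatrix_eq_jordan {V : Type*} [AddCommGroup V] [Module ℂ V] {x : ℂ}
    {f : V →ₗ[ℂ] V} {B : Module.Basis (Fin 2 ⊕ (Fin 1 ⊕ Fin 1)) ℂ V}
    (hB : LinearMap.toMatrix B B f = Matrix.fromBlocks (jordanBlock 1 2) 0 0
      (Matrix.fromBlocks (jordanBlock x 1) 0 0 (jordanBlock x⁻¹ 1))) :
    f (B (inl 0)) = B (inl 0) ∧ f (B (inl 1)) = B (inl 0) + B (inl 1) ∧
      f (B (inr (inl 0))) = x • B (inr (inl 0)) ∧ f (B (inr (inr 0))) = x⁻¹ • B (inr (inr 0)) := by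
  have hf := (LinearMap.toMatrix_eq_iff_apply_basis B f _).1 hB
  refine ⟨?_, ?_, ?_, ?_⟩ <;> simp [hf, Fintype.sum_sum_type, jordanBlock]

theorem exterior_square_jordan_J1_2_x_xinv_general (V : Type*) [AddCommGroup V] [Module ℂ V]
    (x : ℂ) (hx : x ≠ 0)
    (f : V →ₗ[ℂ] V)
    (B : Module.Basis (Fin 2 ⊕ (Fin 1 ⊕ Fin 1)) ℂ V)
    (hB : LinearMap.toMatrix B B f = Matrix.fromBlocks (jordanBlock 1 2) 0 0 (Matrix.fromBlocks (jordanBlock x 1) 0 0 (jordanBlock x⁻¹ 1)))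
    (g : (⋀[ℂ]^2 V) →ₗ[ℂ] (⋀[ℂ]^2 V))
    (hg : ∀ v w : V, g (wedge v w) = wedge (f v) (f w)) :
    ∃ C : Module.Basis (Fin 2 ⊕ (Fin 2 ⊕ (Fin 1 ⊕ Fin 1))) ℂ (⋀[ℂ]^2 V),
      LinearMap.toMatrix C C g = Matrix.fromBlocks (jordanBlock x 2) 0 0 (Matrix.fromBlocks (jordanBlock x⁻¹ 2) 0 0 (Matrix.fromBlocks (jordanBlock 1 1) 0 0 (jordanBlock 1 1))) := by
  obtain ⟨h₀, h₁, h₂, h₃⟩ := apply_basis_of_toMatrix_eq_jordan hB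
  refine ⟨wedgeJordanBasis hx B, (LinearMap.toMatrix_eq_iff_apply_basis _ g _).2 fun j => ?_⟩
  simpa only [wedgeJordanBasis, coe_basisOfTopLeSpanOfCardEqFinrank] using
    apply_wedgeJordanFamily hx hg h₀ h₁ h₂ h₃ j

/-- Let `x ∈ ℂ` with `x ≠ 0`. If the matrix of the endomorphism `f` of the 4-dimensional ℂ-vector space `V` in some basis is diag(J(1,2), J(x,1), J(x⁻¹,1)), then in some basis of the 6-dimensional space ⋀²V the induced endomorphism ⋀²f (characterized by `v ∧ w ↦ f v ∧ f w`) has matrix diag(J(x,2), J(x⁻¹,2), J(1,1), J(1,1)). -/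
theorem exterior_square_jordan_J1_2_x_xinv (V : Type*) [AddCommGroup V] [Module ℂ V]
    (hdim : Module.finrank ℂ V = 4)
    (x : ℂ) (hx : x ≠ 0)
    (f : V →ₗ[ℂ] V)
    (B : Module.Basis (Fin 2 ⊕ (Fin 1 ⊕ Fin 1)) ℂ V)
    (hB : LinearMap.toMatrix B B f = Matrix.fromBlocks (jordanBlock 1 2) 0 0 (Matrix.fromBlocks (jordanBlock x 1) 0 0 (jordanBlock x⁻¹ 1)))
    (g : (⋀[ℂ]^2 V) →ₗ[ℂ] (⋀[ℂ]^2 V))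
    (hg : ∀ v w : V, g (wedge v w) = wedge (f v) (f w)) :
    ∃ C : Module.Basis (Fin 2 ⊕ (Fin 2 ⊕ (Fin 1 ⊕ Fin 1))) ℂ (⋀[ℂ]^2 V),
      LinearMap.toMatrix C C g = Matrix.fromBlocks (jordanBlock x 2) 0 0 (Matrix.fromBlocks (jordanBlock x⁻¹ 2) 0 0 (Matrix.fromBlocks (jordanBlock 1 1) 0 0 (jordanBlock 1 1))) :=
  exterior_square_jordan_J1_2_x_xinv_general V x hx f B hB g hg
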